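/- arXiv:1504.06700 — 3 statements merged into one kernel-verified Lean document; each statement's English description precedes it below -/
import Mathlib

section
/- Weak duality: for an inconsistent PMCS, the union of all minimal c-inconsistency explanations equals the union of all c-diagnoses, i.e., ⋃ E⁺_c((M,≤s)) = ⋃ D⁻_c((M,≤s)). -/
/-!
Write `N = br \ K`. Since `br \ D = K ∪ (N \ D)` for `D ⊆ N`, a set `E ⊆ N` is a c-inconsistency
explanation exactly when it meets every s-diagnosis contained in `N`, and the c-diagnoses are the
minimal such s-diagnoses. So the minimal explanations are the minimal hitting sets of the family
of s-diagnoses inside `N`, and the theorem is an instance of the fact that, for any family of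
subsets of a finite set `U`, the minimal hitting sets and the minimal members cover the same points.
The family need not be upward closed: a set hits it iff it hits its minimal members.
-/

/-- `D` is an s-diagnosis of the system with bridge rules `br`. -/
def SDiag {α : Type*} [DecidableEq α] (br : Finset α) (Bot : Finset α → Prop)
    (D : Finset α) : Prop :=
  D ⊆ br ∧ ¬ Bot (br \ D)

/-- `D` is a c-diagnosis: a ⊆-minimal s-diagnosis disjoint from `K`. -/
def CDiag {α : Type*} [DecidableEq α] (br K : Finset α) (Bot : Finset α → Prop)
    (D : Finset α) : Prop :=
  SDiag br Bot D ∧ (∀ D', D' ⊆ D → SDiag br Bot D' → D' = D) ∧ D ∩ K = ∅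

/-- `E` is a c-inconsistency explanation relative to the maximal consistent section `K`. -/
def CExpl {α : Type*} [DecidableEq α] (br K : Finset α) (Bot : Finset α → Prop)
    (E : Finset α) : Prop :=
  E ⊆ br \ K ∧ ∀ R, E ⊆ R → R ⊆ br \ K → Bot (K ∪ R)

namespace Finset

variable {α : Type*}

theorem minimal_iff_forall_subset_eq {P : Finset α → Prop} {s : Finset α} :
    Minimal P s ↔ P s ∧ ∀ t, t ⊆ s → P t → t = s :=
  minimal_iff.trans <| and_congr_right fun _ =>
    ⟨fun h _ hts ht => (h ht hts).symm, fun h _ ht hts => (h _ hts ht).symm⟩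

variable [DecidableEq α]

def IsHittingSet (U : Finset α) (P : Finset α → Prop) (E : Finset α) : Prop :=
  E ⊆ U ∧ ∀ F, P F → ¬ Disjoint F E

theorem exists_minimal_mem_of_mem_minimal_isHittingSet {U E : Finset α} {P : Finset α → Prop}
    {x : α} (hE : Minimal (IsHittingSet U P) E) (hx : x ∈ E) : ∃ F, Minimal P F ∧ x ∈ F := by
  have hnot : ¬ IsHittingSet U P (E.erase x) := fun h =>
    notMem_erase x E (hE.le_of_le h (erase_subset x E) hx)
  obtain ⟨F, hF, hFE⟩ : ∃ F, P F ∧ Disjoint F (E.erase x) := by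
    by_contra! h
    exact hnot ⟨(erase_subset x E).trans hE.prop.1, h⟩
  obtain ⟨G, hGF, hG⟩ := exists_minimal_le_of_wellFoundedLT P F hF
  obtain ⟨y, hyG, hyE⟩ := not_disjoint_iff.mp (hE.prop.2 G hG.prop)
  have hyx : y = x := by
    by_contra hyx
    exact disjoint_left.mp hFE (hGF hyG) (mem_erase.mpr ⟨hyx, hyE⟩)
  exact ⟨G, hG, hyx ▸ hyG⟩

theorem exists_minimal_isHittingSet_mem_of_mem_minimal {U F : Finset α} {P : Finset α → Prop}
    {x : α} (hU : ∀ G, P G → G ⊆ U) (hF : Minimal P F) (hx : x ∈ F) :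
    ∃ E, Minimal (IsHittingSet U P) E ∧ x ∈ E := by
  -- This set hits `F` at `x`, and any other member of `P` outside `F`, by minimality of `F`.
  have hE₀ : IsHittingSet U P (insert x (U \ F)) := by
    refine ⟨insert_subset (hU F hF.prop hx) sdiff_subset, fun G hG hdisj => ?_⟩
    by_cases hGF : G ⊆ F
    · exact disjoint_left.mp hdisj (hF.le_of_le hG hGF hx) (mem_insert_self x _)
    · obtain ⟨y, hyG, hyF⟩ := not_subset.mp hGF
      exact disjoint_left.mp hdisj hyG
        (mem_insert_of_mem (mem_sdiff.mpr ⟨hU G hG hyG, hyF⟩))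
  obtain ⟨E, hEE₀, hE⟩ := exists_minimal_le_of_wellFoundedLT _ _ hE₀
  refine ⟨E, hE, ?_⟩
  by_contra hxE
  refine hE.prop.2 F hF.prop (disjoint_left.mpr fun y hyF hyE => ?_)
  rcases mem_insert.mp (hEE₀ hyE) with rfl | hy
  · exact hxE hyE
  · exact (mem_sdiff.mp hy).2 hyF

theorem setOf_mem_minimal_isHittingSet {U : Finset α} {P : Finset α → Prop}
    (hU : ∀ G, P G → G ⊆ U) :
    {x | ∃ E, Minimal (IsHittingSet U P) E ∧ x ∈ E} = {x | ∃ F, Minimal P F ∧ x ∈ F} := by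
  ext x
  exact ⟨fun ⟨_, hE, hx⟩ => exists_minimal_mem_of_mem_minimal_isHittingSet hE hx,
    fun ⟨_, hF, hx⟩ => exists_minimal_isHittingSet_mem_of_mem_minimal hU hF hx⟩

end Finset

open Finset

section Diagnosis

variable {α : Type*} [DecidableEq α] {br K : Finset α} {Bot : Finset α → Prop}

theorem sDiag_sdiff_iff (hK : K ⊆ br) {R : Finset α} (hR : R ⊆ br \ K) :
    SDiag br Bot ((br \ K) \ R) ↔ ¬ Bot (K ∪ R) := by
  have hcompl : br \ ((br \ K) \ R) = K ∪ R := by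
    ext a
    have := @hK a
    have := @hR a
    simp only [mem_sdiff, mem_union] at *
    tauto
  rw [SDiag, hcompl]
  exact and_iff_right (sdiff_subset.trans sdiff_subset)

theorem cExpl_iff_isHittingSet (hK : K ⊆ br) {E : Finset α} :
    CExpl br K Bot E ↔ IsHittingSet (br \ K) (fun D => D ⊆ br \ K ∧ SDiag br Bot D) E := by
  refine and_congr_right fun hE => ⟨fun h D ⟨hD, hSD⟩ hDE => ?_, fun h R hER hR => ?_⟩
  · rw [← Finset.sdiff_sdiff_eq_self hD, sDiag_sdiff_iff hK sdiff_subset] at hSD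
    exact hSD (h _ (subset_sdiff.mpr ⟨hE, hDE.symm⟩) sdiff_subset)
  · by_contra hBot
    exact h _ ⟨sdiff_subset, (sDiag_sdiff_iff hK hR).mpr hBot⟩
      (disjoint_of_subset_right hER sdiff_disjoint)

theorem cDiag_iff_minimal {D : Finset α} :
    CDiag br K Bot D ↔ Minimal (fun D => D ⊆ br \ K ∧ SDiag br Bot D) D := by
  have hsub_iff {D : Finset α} (hD : SDiag br Bot D) : D ⊆ br \ K ↔ D ∩ K = ∅ := by
    rw [subset_sdiff, ← disjoint_iff_inter_eq_empty]
    exact and_iff_right hD.1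
  rw [minimal_iff_forall_subset_eq, CDiag]
  constructor
  · rintro ⟨hD, hmin, hDK⟩
    exact ⟨⟨(hsub_iff hD).2 hDK, hD⟩, fun t ht hQ => hmin t ht hQ.2⟩
  · rintro ⟨⟨hDN, hD⟩, hmin⟩
    exact ⟨hD, fun t ht hSt => hmin t ht ⟨ht.trans hDN, hSt⟩, (hsub_iff hD).1 hDN⟩

end Diagnosis

theorem weak_duality_general {α : Type*} [DecidableEq α]
    (br K : Finset α) (Bot : Finset α → Prop)
    (hK : K ⊆ br) :
    {x : α | ∃ E, CExpl br K Bot E ∧ (∀ E', E' ⊆ E → CExpl br K Bot E' → E' = E) ∧ x ∈ E}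
      = {x : α | ∃ D, CDiag br K Bot D ∧ x ∈ D} := by
  have hExpl : CExpl br K Bot = IsHittingSet (br \ K) (fun D => D ⊆ br \ K ∧ SDiag br Bot D) :=
    funext fun _ => propext (cExpl_iff_isHittingSet hK)
  simp_rw [← and_assoc, ← minimal_iff_forall_subset_eq, hExpl, cDiag_iff_minimal]
  exact setOf_mem_minimal_isHittingSet fun _ h => h.1

/-- weak duality: for an inconsistent PMCS, the union of all minimal
c-inconsistency explanations equals the union of all c-diagnoses:
⋃ E⁺_c((M,≤s)) = ⋃ D⁻_c((M,≤s)). -/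
theorem weak_duality {α : Type*} [DecidableEq α]
    (br K : Finset α) (Bot : Finset α → Prop)
    (hK : K ⊆ br) (hKcons : ¬ Bot K) (hbr : Bot br) :
    {x : α | ∃ E, CExpl br K Bot E ∧ (∀ E', E' ⊆ E → CExpl br K Bot E' → E' = E) ∧ x ∈ E}
      = {x : α | ∃ D, CDiag br K Bot D ∧ x ∈ D} :=
  weak_duality_general br K Bot hK
end

section
/- For any subset E of a finite set br with inconsistency predicate Bot, if E is a minimal s-inconsistency explanation (every R with E ⊆ R ⊆ br satisfies Bot(R), and no proper subset of E has this property), then for every x ∈ E there exists a minimal s-diagnosis D with x ∈ D; consequently ⋃ E⁺_m(M) ⊆ ⋃ D⁻_m(M). -/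
/-- `E` is an s-inconsistency explanation. -/
def SExpl {α : Type*} [DecidableEq α] (br : Finset α) (Bot : Finset α → Prop)
    (E : Finset α) : Prop :=
  E ⊆ br ∧ ∀ R, E ⊆ R → R ⊆ br → Bot R

/-!
Every explanation meets every diagnosis `D`, since otherwise it would lie inside the consistent
set `br \ D`. If `E` is a minimal explanation and `x ∈ E`, then `E.erase x` is not an explanation,
so it extends to a consistent `R ⊆ br`. Any minimal diagnosis inside `br \ R` meets `E`, and the
only element of `E` it can contain is `x`.
-/

section

variable {α : Type*} [DecidableEq α] {br : Finset α} {Bot : Finset α → Prop}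

theorem sDiag_sdiff_of_not_bot {R : Finset α} (hR : R ⊆ br) (hcons : ¬ Bot R) :
    SDiag br Bot (br \ R) := by
  refine ⟨Finset.sdiff_subset, ?_⟩
  rwa [Finset.sdiff_sdiff_eq_self hR]

theorem SExpl.not_disjoint_sDiag {E D : Finset α} (hE : SExpl br Bot E) (hD : SDiag br Bot D) :
    ¬ Disjoint E D := fun hdisj =>
  hD.2 (hE.2 _ (Finset.subset_sdiff.2 ⟨hE.1, hdisj⟩) Finset.sdiff_subset)

theorem SExpl.exists_not_bot_of_minimal {E : Finset α} (hE : SExpl br Bot E)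
    (hmin : ∀ E', E' ⊆ E → SExpl br Bot E' → E' = E) {x : α} (hx : x ∈ E) :
    ∃ R, E.erase x ⊆ R ∧ R ⊆ br ∧ ¬ Bot R := by
  have hnot : ¬ SExpl br Bot (E.erase x) := fun h =>
    Finset.notMem_erase x E (by rwa [hmin _ (Finset.erase_subset x E) h])
  by_contra! h
  exact hnot ⟨(Finset.erase_subset x E).trans hE.1, h⟩

theorem SExpl.exists_minimal_sDiag_mem {E : Finset α} (hE : SExpl br Bot E)
    (hmin : ∀ E', E' ⊆ E → SExpl br Bot E' → E' = E) {x : α} (hx : x ∈ E) :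
    ∃ D, Minimal (SDiag br Bot) D ∧ x ∈ D := by
  obtain ⟨R, hER, hRbr, hcons⟩ := hE.exists_not_bot_of_minimal hmin hx
  obtain ⟨D, hDR, hD⟩ :=
    exists_minimal_le_of_wellFoundedLT _ _ (sDiag_sdiff_of_not_bot (Bot := Bot) hRbr hcons)
  obtain ⟨y, hyE, hyD⟩ := Finset.not_disjoint_iff.1 (hE.not_disjoint_sDiag hD.prop)
  refine ⟨D, hD, ?_⟩
  by_contra hxD
  have hyR : y ∈ R := hER (Finset.mem_erase.2 ⟨fun hyx => hxD (hyx ▸ hyD), hyE⟩)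
  exact (Finset.mem_sdiff.1 (hDR hyD)).2 hyR

end

theorem expl_union_subset_diag_union_general {α : Type*} [DecidableEq α]
    (br : Finset α) (Bot : Finset α → Prop) :
    (∀ E, SExpl br Bot E → (∀ E', E' ⊆ E → SExpl br Bot E' → E' = E) →
      ∀ x ∈ E, ∃ D, SDiag br Bot D ∧ (∀ D', D' ⊆ D → SDiag br Bot D' → D' = D) ∧ x ∈ D) ∧
    {x : α | ∃ E, SExpl br Bot E ∧ (∀ E', E' ⊆ E → SExpl br Bot E' → E' = E) ∧ x ∈ E}
      ⊆ {x : α | ∃ D, SDiag br Bot D ∧ (∀ D', D' ⊆ D → SDiag br Bot D' → D' = D) ∧ x ∈ D} := by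
  have hmem : ∀ E, SExpl br Bot E → (∀ E', E' ⊆ E → SExpl br Bot E' → E' = E) →
      ∀ x ∈ E, ∃ D, SDiag br Bot D ∧ (∀ D', D' ⊆ D → SDiag br Bot D' → D' = D) ∧ x ∈ D := by
    intro E hE hmin x hx
    obtain ⟨D, hD, hxD⟩ := hE.exists_minimal_sDiag_mem hmin hx
    exact ⟨D, hD.prop, fun D' hD'D hD' => hD.eq_of_le hD' hD'D, hxD⟩
  exact ⟨hmem, fun x ⟨E, hE, hmin, hx⟩ => hmem E hE hmin x hx⟩

/-- if `E` is a minimal s-inconsistency explanation then each `x ∈ E`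
belongs to some minimal s-diagnosis; consequently ⋃ E⁺_m(M) ⊆ ⋃ D⁻_m(M). -/
theorem expl_union_subset_diag_union {α : Type*} [DecidableEq α]
    (br : Finset α) (Bot : Finset α → Prop) (hbr : Bot br) (hemp : ¬ Bot ∅) :
    (∀ E, SExpl br Bot E → (∀ E', E' ⊆ E → SExpl br Bot E' → E' = E) →
      ∀ x ∈ E, ∃ D, SDiag br Bot D ∧ (∀ D', D' ⊆ D → SDiag br Bot D' → D' = D) ∧ x ∈ D) ∧
    {x : α | ∃ E, SExpl br Bot E ∧ (∀ E', E' ⊆ E → SExpl br Bot E' → E' = E) ∧ x ∈ E}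
      ⊆ {x : α | ∃ D, SDiag br Bot D ∧ (∀ D', D' ⊆ D → SDiag br Bot D' → D' = D) ∧ x ∈ D} :=
  expl_union_subset_diag_union_general br Bot
end

section
/- Suppose Bot : Finset br → Prop satisfies Bot(br), and K ⊆ br with ¬Bot(K). If D is a c-diagnosis (minimal s-diagnosis disjoint from K) and x ∈ D, then letting Ẽ = br \ (D \ {x}), we have K ⊆ Ẽ and Bot(R ∪ K) for every R with Ẽ \ K ⊆ R ⊆ br \ K; hence E := Ẽ \ K is a c-inconsistency explanation containing x. -/
/-!
If some `R` between `Ẽ \ K` and `br \ K` had `¬ Bot (K ∪ R)`, then `br \ (K ∪ R)` would be an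
s-diagnosis inside `D \ {x}`, strictly smaller than `D`, contradicting the minimality of `D`.
-/

open Finset

section

variable {α : Type*} [DecidableEq α]

def IsSDiagnosis (Bot : Finset α → Prop) (br D : Finset α) : Prop :=
  D ⊆ br ∧ ¬ Bot (br \ D)

theorem bot_of_sdiff_sdiff_singleton_subset {Bot : Finset α → Prop} {br D S : Finset α}
    (hDmin : ∀ D', D' ⊆ D → IsSDiagnosis Bot br D' → D' = D) {x : α} (hx : x ∈ D)
    (hES : br \ (D \ {x}) ⊆ S) (hS : S ⊆ br) : Bot S := by
  by_contra hSbot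
  have hsmall : br \ S ⊆ D \ {x} := sdiff_le_comm.mp hES
  have hdiag : IsSDiagnosis Bot br (br \ S) :=
    ⟨sdiff_subset, by rwa [Finset.sdiff_sdiff_eq_self hS]⟩
  have heq : br \ S = D := hDmin _ (hsmall.trans sdiff_subset) hdiag
  exact (mem_sdiff.mp (hsmall (heq ▸ hx))).2 (mem_singleton_self x)

end

theorem c_diag_to_c_expl_general {α : Type*} [DecidableEq α]
    (br K D : Finset α) (Bot : Finset α → Prop)
    (hK : K ⊆ br)
    (hD : D ⊆ br ∧ ¬ Bot (br \ D))
    (hDmin : ∀ D', D' ⊆ D → (D' ⊆ br ∧ ¬ Bot (br \ D')) → D' = D)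
    (hDK : D ∩ K = ∅) (x : α) (hx : x ∈ D) :
    K ⊆ br \ (D \ {x}) ∧
    (∀ R, (br \ (D \ {x})) \ K ⊆ R → R ⊆ br \ K → Bot (K ∪ R)) ∧
    ((br \ (D \ {x})) \ K ⊆ br \ K ∧
      ∀ R, (br \ (D \ {x})) \ K ⊆ R → R ⊆ br \ K → Bot (K ∪ R)) ∧
    x ∈ (br \ (D \ {x})) \ K := by
  have hdisj : Disjoint D K := disjoint_iff_inter_eq_empty.mpr hDK
  have hKE : K ⊆ br \ (D \ {x}) :=
    subset_sdiff.mpr ⟨hK, (hdisj.mono_left sdiff_subset).symm⟩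
  have hbot : ∀ R, (br \ (D \ {x})) \ K ⊆ R → R ⊆ br \ K → Bot (K ∪ R) :=
    fun R hER hR => bot_of_sdiff_sdiff_singleton_subset hDmin hx
      (sdiff_le_iff.mp hER) (union_subset hK (hR.trans sdiff_subset))
  have hxE : x ∈ (br \ (D \ {x})) \ K := by
    simp [hD.1 hx, disjoint_left.mp hdisj hx]
  exact ⟨hKE, hbot, ⟨sdiff_subset_sdiff sdiff_subset le_rfl, hbot⟩, hxE⟩

/-- key construction in the proof of ⋃ D⁻_c ⊆ ⋃ E⁺_c.  If `D` is a
c-diagnosis (a ⊆-minimal s-diagnosis disjoint from the bridge rules `K` of the maximal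
consistent section) and `x ∈ D`, then with Ẽ = br \ (D \ {x}) we have K ⊆ Ẽ,
every `R` with Ẽ \ K ⊆ R ⊆ br \ K satisfies `Bot (K ∪ R)`, and `E := Ẽ \ K` is a
c-inconsistency explanation containing `x`. -/
theorem c_diag_to_c_expl {α : Type*} [DecidableEq α]
    (br K D : Finset α) (Bot : Finset α → Prop)
    (hbr : Bot br) (hK : K ⊆ br) (hKcons : ¬ Bot K)
    (hD : D ⊆ br ∧ ¬ Bot (br \ D))
    (hDmin : ∀ D', D' ⊆ D → (D' ⊆ br ∧ ¬ Bot (br \ D')) → D' = D)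
    (hDK : D ∩ K = ∅) (x : α) (hx : x ∈ D) :
    K ⊆ br \ (D \ {x}) ∧
    (∀ R, (br \ (D \ {x})) \ K ⊆ R → R ⊆ br \ K → Bot (K ∪ R)) ∧
    ((br \ (D \ {x})) \ K ⊆ br \ K ∧
      ∀ R, (br \ (D \ {x})) \ K ⊆ R → R ⊆ br \ K → Bot (K ∪ R)) ∧
    x ∈ (br \ (D \ {x})) \ K :=
  c_diag_to_c_expl_general br K D Bot hK hD hDmin hDK x hx
end
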